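/- arXiv:2511.12724 — 6 statements merged into one kernel-verified Lean document; each statement's English description precedes it below -/
import Mathlib

section
/- Let (X, ζ)_ξ and (X', ζ')_ξ be soft topological spaces over the same parameter set ξ, and let (𝕀_ξ, ϱ) : (X, ζ)_ξ → (X', ζ')_ξ be a soft continuous mapping. If (X, ζ)_ξ is soft connected, then the image ϱ(X) with its soft subspace topology is soft connected. -/
open Pointwise Set

def IsSoftTopology {X ξ : Type*} (ζ : Set (ξ → Set X)) : Prop :=
  ((fun _ => (∅ : Set X)) ∈ ζ) ∧ ((fun _ => (Set.univ : Set X)) ∈ ζ) ∧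
  (∀ S : Set (ξ → Set X), S ⊆ ζ → (fun e => ⋃ W ∈ S, W e) ∈ ζ) ∧
  (∀ U V : ξ → Set X, U ∈ ζ → V ∈ ζ → (fun e => U e ∩ V e) ∈ ζ)

def SoftConnected {X ξ : Type*} (ζ : Set (ξ → Set X)) : Prop :=
  ¬ ∃ A B : Set X, A.Nonempty ∧ B.Nonempty ∧ A ∩ B = ∅ ∧ A ∪ B = Set.univ ∧
    ((fun _ => A) ∈ ζ) ∧ ((fun _ => B) ∈ ζ)

def SoftSubspace {X ξ : Type*} (ζ : Set (ξ → Set X)) (A : Set X) : Set (ξ → Set X) :=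
  {V | ∃ W ∈ ζ, V = fun e => W e ∩ A}

def SoftConnectedOn {X ξ : Type*} (ζ : Set (ξ → Set X)) (S : Set X) : Prop :=
  ¬ ∃ A B : Set X, A.Nonempty ∧ B.Nonempty ∧ A ∩ B = ∅ ∧ A ∪ B = S ∧
    ((fun _ => A) ∈ SoftSubspace ζ S) ∧ ((fun _ => B) ∈ SoftSubspace ζ S)

def SoftContinuous {X Y ξ : Type*} (ζ : Set (ξ → Set X)) (ζ' : Set (ξ → Set Y))
    (ρ : X → Y) : Prop :=
  ∀ x : X, ∀ W' ∈ ζ', (∀ e, ρ x ∈ W' e) →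
    ∃ W ∈ ζ, (∀ e, x ∈ W e) ∧ ∀ e, ρ '' (W e) ⊆ W' e

def SoftContinuousMap {X Y ξ ξ' : Type*} (ζ : Set (ξ → Set X)) (ζ' : Set (ξ' → Set Y))
    (φ : ξ → ξ') (ρ : X → Y) : Prop :=
  ∀ x : X, ∀ W' ∈ ζ', (∀ d, ρ x ∈ W' d) →
    ∃ W ∈ ζ, (∀ e, x ∈ W e) ∧ ∀ e, ρ '' (W e) ⊆ W' (φ e)

def SoftUsual (ξ : Type*) : Set (ξ → Set ℝ) :=
  {W | ∃ G : Set ℝ, IsOpen G ∧ W = fun _ => G}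

def IsSoftPath {X ξ : Type*} (ζ : Set (ξ → Set X)) (γ : ℝ → X) (x y : X) : Prop :=
  γ 0 = x ∧ γ 1 = y ∧
  ∀ t ∈ Set.Icc (0:ℝ) 1, ∀ W' ∈ ζ, (∀ e, γ t ∈ W' e) →
    ∃ W ∈ SoftSubspace (SoftUsual ξ) (Set.Icc (0:ℝ) 1),
      (∀ e, t ∈ W e) ∧ ∀ e, γ '' (W e) ⊆ W' e

def SoftPathConnected {X ξ : Type*} (ζ : Set (ξ → Set X)) : Prop :=
  ∀ x y : X, ∃ γ : ℝ → X, IsSoftPath ζ γ x y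

def SoftPathConnectedOn {X ξ : Type*} (ζ : Set (ξ → Set X)) (A : Set X) : Prop :=
  ∀ x ∈ A, ∀ y ∈ A, ∃ γ : ℝ → X, (∀ t ∈ Set.Icc (0:ℝ) 1, γ t ∈ A) ∧
    IsSoftPath (SoftSubspace ζ A) γ x y

def SoftProdTop {X Y ξ ξ' : Type*} (ζ : Set (ξ → Set X)) (ζ' : Set (ξ' → Set Y)) :
    Set (ξ × ξ' → Set (X × Y)) :=
  {O | ∃ S : Set ((ξ → Set X) × (ξ' → Set Y)),
      (∀ p ∈ S, p.1 ∈ ζ ∧ p.2 ∈ ζ') ∧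
      O = fun e => ⋃ p ∈ S, p.1 e.1 ×ˢ p.2 e.2}

def IsSoftTopGroup {G ξ : Type*} [Group G] (ζ : Set (ξ → Set G)) : Prop :=
  IsSoftTopology ζ ∧
  ∀ a b : G, ∀ W ∈ ζ, (∀ e, a * b⁻¹ ∈ W e) →
    ∃ U ∈ ζ, ∃ V ∈ ζ, (∀ e, a ∈ U e) ∧ (∀ e, b ∈ V e) ∧
      ∀ e, U e * (V e)⁻¹ ⊆ W e

def IsSoftTopGroupMulInv {G ξ : Type*} [Group G] (ζ : Set (ξ → Set G)) : Prop :=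
  IsSoftTopology ζ ∧
  (∀ a b : G, ∀ W ∈ ζ, (∀ e, a * b ∈ W e) →
     ∃ U ∈ ζ, ∃ V ∈ ζ, (∀ e, a ∈ U e) ∧ (∀ e, b ∈ V e) ∧ ∀ e, U e * V e ⊆ W e) ∧
  SoftContinuous ζ ζ (fun a : G => a⁻¹)

def SoftContinuousAt {X Y ξ : Type*} (ζ : Set (ξ → Set X)) (ζ' : Set (ξ → Set Y))
    (ρ : X → Y) (x : X) : Prop :=
  ∀ W' ∈ ζ', (∀ e, ρ x ∈ W' e) →
    ∃ W ∈ ζ, (∀ e, x ∈ W e) ∧ ∀ e, ρ '' (W e) ⊆ W' e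
lemma preimage_open {X X' ξ : Type*} (ζ : Set (ξ → Set X)) (ζ' : Set (ξ → Set X'))
    (hζ : IsSoftTopology ζ) (ρ : X → X') (hρ : SoftContinuous ζ ζ' ρ) (A : Set X')
    (hA : (fun _ => A) ∈ SoftSubspace ζ' (Set.range ρ)) :
    (fun _ : ξ => ρ ⁻¹' A) ∈ ζ := by
  obtain ⟨WA, hWA, hAeq⟩ := hA
  have hAe : ∀ e, A = WA e ∩ Set.range ρ := fun e => congrFun hAeq e
  set S : Set (ξ → Set X) := {W | W ∈ ζ ∧ ∀ e, ρ '' W e ⊆ WA e} with hS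
  have hsub : S ⊆ ζ := fun W hW => hW.1
  have key := hζ.2.2.1 S hsub
  have : (fun e : ξ => ⋃ W ∈ S, W e) = fun _ => ρ ⁻¹' A := by
    funext e
    apply Set.Subset.antisymm
    · intro y hy
      simp only [Set.mem_iUnion] at hy
      obtain ⟨W, hWS, hyW⟩ := hy
      have : ρ y ∈ WA e := hWS.2 e ⟨y, hyW, rfl⟩
      show ρ y ∈ A
      rw [hAe e]; exact ⟨this, ⟨y, rfl⟩⟩
    · intro x hx
      have hx' : ∀ e, ρ x ∈ WA e := fun e => ((hAe e) ▸ hx).1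
      obtain ⟨W, hW, hxW, himg⟩ := hρ x WA hWA hx'
      simp only [Set.mem_iUnion]
      exact ⟨W, ⟨hW, himg⟩, hxW e⟩
  rwa [this] at key

theorem stmt1 {X X' ξ : Type*} (ζ : Set (ξ → Set X)) (ζ' : Set (ξ → Set X'))
    (hζ : IsSoftTopology ζ) (hζ' : IsSoftTopology ζ') (ρ : X → X')
    (hρ : SoftContinuous ζ ζ' ρ) (hcon : SoftConnected ζ) :
    SoftConnectedOn ζ' (Set.range ρ) := by
  rintro ⟨A, B, hAne, hBne, hAB, hABu, hAo, hBo⟩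
  apply hcon
  refine ⟨ρ ⁻¹' A, ρ ⁻¹' B, ?_, ?_, ?_, ?_, preimage_open ζ ζ' hζ ρ hρ A hAo,
    preimage_open ζ ζ' hζ ρ hρ B hBo⟩
  · obtain ⟨a, ha⟩ := hAne
    have : a ∈ Set.range ρ := hABu ▸ Or.inl ha
    obtain ⟨x, rfl⟩ := this
    exact ⟨x, ha⟩
  · obtain ⟨b, hb⟩ := hBne
    have : b ∈ Set.range ρ := hABu ▸ Or.inr hb
    obtain ⟨x, rfl⟩ := this
    exact ⟨x, hb⟩
  · rw [← Set.preimage_inter, hAB, Set.preimage_empty]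
  · rw [← Set.preimage_union, hABu]
    exact Set.eq_univ_of_forall fun x => ⟨x, rfl⟩
end

section
/- Let (X, ζ)_ξ be a soft connected topological space and (𝕀_ξ, ϱ) : (X, ζ)_ξ → (ℝ, 𝒰_ξ) a soft continuous mapping into the soft usual topological space. If a, b ∈ ϱ(X), then ϱ attains every value between a and b (intermediate value theorem for soft continuous maps). -/
open Pointwise Set

lemma preimage_soft_open {X ξ : Type*} (ζ : Set (ξ → Set X)) (hζ : IsSoftTopology ζ)
    (ρ : X → ℝ) (hρ : SoftContinuous ζ (SoftUsual ξ) ρ) (G : Set ℝ) (hG : IsOpen G) :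
    (fun _ : ξ => ρ ⁻¹' G) ∈ ζ := by
  have key : (fun e : ξ => ⋃ W ∈ {W ∈ ζ | ∀ e, ρ '' (W e) ⊆ G}, W e) ∈ ζ :=
    hζ.2.2.1 _ (fun W hW => hW.1)
  have : (fun _ : ξ => ρ ⁻¹' G) = fun e : ξ => ⋃ W ∈ {W ∈ ζ | ∀ e, ρ '' (W e) ⊆ G}, W e := by
    funext e
    ext x
    simp only [Set.mem_preimage, Set.mem_iUnion, Set.mem_setOf_eq]
    constructor
    · intro hx
      obtain ⟨W, hW, hxW, hsub⟩ := hρ x (fun _ => G) ⟨G, hG, rfl⟩ (fun _ => hx)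
      exact ⟨W, ⟨hW, hsub⟩, hxW e⟩
    · rintro ⟨W, ⟨-, hsub⟩, hxW⟩
      exact hsub e ⟨x, hxW, rfl⟩
  rw [this]; exact key

theorem stmt6 {X ξ : Type*} (ζ : Set (ξ → Set X)) (hζ : IsSoftTopology ζ)
    (hcon : SoftConnected ζ) (ρ : X → ℝ) (hρ : SoftContinuous ζ (SoftUsual ξ) ρ)
    (a b : ℝ) (ha : a ∈ Set.range ρ) (hb : b ∈ Set.range ρ) :
    Set.Icc (min a b) (max a b) ⊆ Set.range ρ := by
  intro c hc
  by_contra hcnot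
  obtain ⟨xa, hxa⟩ := ha
  obtain ⟨xb, hxb⟩ := hb
  have hAopen := preimage_soft_open ζ hζ ρ hρ (Set.Iio c) isOpen_Iio
  have hBopen := preimage_soft_open ζ hζ ρ hρ (Set.Ioi c) isOpen_Ioi
  apply hcon
  refine ⟨ρ ⁻¹' Set.Iio c, ρ ⁻¹' Set.Ioi c, ?_, ?_, ?_, ?_, hAopen, hBopen⟩
  · -- nonempty: min a b < c
    have hmin : min a b < c := lt_of_le_of_ne hc.1 (by
      rintro rfl
      rcases min_cases a b with ⟨h,-⟩|⟨h,-⟩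
      · exact hcnot ⟨xa, hxa.trans h.symm⟩
      · exact hcnot ⟨xb, hxb.trans h.symm⟩)
    rcases min_cases a b with ⟨h,-⟩|⟨h,-⟩
    · exact ⟨xa, by simp [Set.mem_preimage, hxa, h ▸ hmin]⟩
    · exact ⟨xb, by simp [Set.mem_preimage, hxb, h ▸ hmin]⟩
  · have hmax : c < max a b := lt_of_le_of_ne hc.2 (by
      rintro rfl
      rcases max_cases a b with ⟨h,-⟩|⟨h,-⟩
      · exact hcnot ⟨xa, hxa.trans h.symm⟩
      · exact hcnot ⟨xb, hxb.trans h.symm⟩)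
    rcases max_cases a b with ⟨h,-⟩|⟨h,-⟩
    · exact ⟨xa, by simp [Set.mem_preimage, hxa, h ▸ hmax]⟩
    · exact ⟨xb, by simp [Set.mem_preimage, hxb, h ▸ hmax]⟩
  · ext x
    simp only [Set.mem_inter_iff, Set.mem_preimage, Set.mem_Iio, Set.mem_Ioi,
      Set.mem_empty_iff_false, iff_false, not_and]
    intro h1 h2
    exact absurd h1 (not_lt.2 h2.le)
  · ext x
    simp only [Set.mem_union, Set.mem_preimage, Set.mem_Iio, Set.mem_Ioi,
      Set.mem_univ, iff_true]
    rcases lt_trichotomy (ρ x) c with h|h|h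
    · exact Or.inl h
    · exact absurd ⟨x, h⟩ hcnot
    · exact Or.inr h
end

section
/- Let (X, ζ)_ξ and (X', ζ')_ξ be soft topological spaces, A ⊆ X, and (𝕀_ξ, ϱ) : (X, ζ)_ξ → (X', ζ')_ξ a soft continuous mapping. If the soft subspace (A, ζ_A)_ξ is soft path connected, then the soft subspace (ϱ(A), ζ'_{ϱ(A)})_ξ is soft path connected. -/
open Pointwise Set

theorem stmt9 {X X' ξ : Type*} (ζ : Set (ξ → Set X)) (ζ' : Set (ξ → Set X'))
    (hζ : IsSoftTopology ζ) (hζ' : IsSoftTopology ζ') (A : Set X) (ρ : X → X')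
    (hρ : SoftContinuous ζ ζ' ρ) (hA : SoftPathConnectedOn ζ A) :
    SoftPathConnectedOn ζ' (ρ '' A) := by
  rintro x' ⟨x, hx, rfl⟩ y' ⟨y, hy, rfl⟩
  obtain ⟨γ, hγA, h0, h1, hcont⟩ := hA x hx y hy
  refine ⟨ρ ∘ γ, fun t ht => ⟨γ t, hγA t ht, rfl⟩, by simp [h0], by simp [h1], ?_⟩
  intro t ht W' hW' hmem
  obtain ⟨V, hV, rfl⟩ := hW'
  obtain ⟨U, hU, hxU, hUV⟩ := hρ (γ t) V hV (fun e => (hmem e).1)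
  obtain ⟨W, hW, htW, hWU⟩ := hcont t ht (fun e => U e ∩ A)
    ⟨U, hU, rfl⟩ (fun e => ⟨hxU e, hγA t ht⟩)
  refine ⟨W, hW, htW, fun e => ?_⟩
  rintro _ ⟨s, hs, rfl⟩
  have h := hWU e ⟨s, hs, rfl⟩
  exact ⟨hUV e ⟨γ s, h.1, rfl⟩, γ s, h.2, rfl⟩
end

section
/- Let (G, ζ)_ξ be a soft topological group. Then the group operation ∗ : G × G → G, (a,b) ↦ a∗b, is soft continuous as a mapping from the soft product space (G × G, ζ_×)_{ξ×ξ} to (G, ζ)_ξ. -/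
open Pointwise Set

theorem stmt11 {G ξ : Type*} [Group G] (ζ : Set (ξ → Set G))
    (hG : IsSoftTopGroupMulInv ζ) :
    ∀ p : G × G, ∀ W ∈ ζ, (∀ e, p.1 * p.2 ∈ W e) →
      ∃ O ∈ SoftProdTop ζ ζ, (∀ e : ξ × ξ, p ∈ O e) ∧
        ∀ e : ξ, (fun q : G × G => q.1 * q.2) '' O (e, e) ⊆ W e := by
  rintro ⟨a, b⟩ W hW hab
  obtain ⟨U, hU, V, hV, haU, hbV, hUV⟩ := hG.2.1 a b W hW hab
  refine ⟨fun e => U e.1 ×ˢ V e.2, ⟨{(U, V)}, ?_, ?_⟩, ?_, ?_⟩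
  · rintro p hp; simp at hp; subst hp; exact ⟨hU, hV⟩
  · funext e; simp
  · exact fun e => ⟨haU e.1, hbV e.2⟩
  · rintro e x ⟨⟨u, v⟩, ⟨hu, hv⟩, rfl⟩
    exact hUV e (Set.mul_mem_mul hu hv)
end

section
/- Let (X, ζ)_ξ be a soft topological space and (G, ζ')_ξ a soft topological group. If (𝕀_ξ, ϱ) and (𝕀_ξ, ϱ') are soft continuous mappings from (X, ζ)_ξ to (G, ζ')_ξ, then the pointwise product (𝕀_ξ, ϱ∗ϱ') defined by x ↦ ϱ(x)∗ϱ'(x) is soft continuous. -/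
open Pointwise Set

theorem stmt14 {X G ξ : Type*} [Group G] (ζ : Set (ξ → Set X)) (ζ' : Set (ξ → Set G))
    (hζ : IsSoftTopology ζ) (hG : IsSoftTopGroupMulInv ζ')
    (ρ ρ' : X → G) (hρ : SoftContinuous ζ ζ' ρ) (hρ' : SoftContinuous ζ ζ' ρ') :
    SoftContinuous ζ ζ' (fun x => ρ x * ρ' x) := by
  intro x W' hW' hx
  obtain ⟨U, hU, V, hV, haU, hbV, hUV⟩ := hG.2.1 (ρ x) (ρ' x) W' hW' hx
  obtain ⟨W1, hW1, hxW1, hρW1⟩ := hρ x U hU haU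
  obtain ⟨W2, hW2, hxW2, hρW2⟩ := hρ' x V hV hbV
  refine ⟨fun e => W1 e ∩ W2 e, hζ.2.2.2 _ _ hW1 hW2, fun e => ⟨hxW1 e, hxW2 e⟩, ?_⟩
  rintro e y ⟨z, ⟨hz1, hz2⟩, rfl⟩
  exact hUV e (Set.mul_mem_mul (hρW1 e ⟨z, hz1, rfl⟩) (hρW2 e ⟨z, hz2, rfl⟩))
end

section
/- Let (G, ζ)_ξ be a soft topological group and H, K soft connected subsets of G. Then the product set H∗K = {h∗k : h ∈ H, k ∈ K} is soft connected. -/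
open Pointwise Set

/-- Left translation continuity, derived from the group axiom. -/
lemma softLeftTrans {G ξ : Type*} [Group G] {ζ : Set (ξ → Set G)}
    (hG : IsSoftTopGroup ζ) (h k : G) (W : ξ → Set G) (hW : W ∈ ζ)
    (hm : ∀ e, h * k ∈ W e) :
    ∃ V ∈ ζ, (∀ e, k ∈ V e) ∧ ∀ e, ∀ v ∈ V e, h * v ∈ W e := by
  obtain ⟨U, hU, V, hV, hhU, hkV, hsub⟩ := hG.2 h k⁻¹ W hW (by simpa using hm)
  obtain ⟨U', hU', V', hV', h1U', hkV', hsub'⟩ := hG.2 1 k V hV (by simpa using hkV)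
  refine ⟨V', hV', hkV', fun e v hv => ?_⟩
  have hvinv : v⁻¹ ∈ V e := by
    have h1 : (1 : G) * v⁻¹ ∈ V e :=
      hsub' e (Set.mul_mem_mul (h1U' e) (Set.inv_mem_inv.2 hv))
    simpa using h1
  have h2 : h * v ∈ W e := hsub e (Set.mul_mem_mul (hhU e) (Set.mem_inv.2 hvinv))
  exact h2

/-- Right translation continuity, derived from the group axiom. -/
lemma softRightTrans {G ξ : Type*} [Group G] {ζ : Set (ξ → Set G)}
    (hG : IsSoftTopGroup ζ) (h k : G) (W : ξ → Set G) (hW : W ∈ ζ)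
    (hm : ∀ e, h * k ∈ W e) :
    ∃ U ∈ ζ, (∀ e, h ∈ U e) ∧ ∀ e, ∀ u ∈ U e, u * k ∈ W e := by
  obtain ⟨U, hU, V, hV, hhU, hkV, hsub⟩ := hG.2 h k⁻¹ W hW (by simpa using hm)
  refine ⟨U, hU, hhU, fun e u hu => ?_⟩
  exact hsub e (Set.mul_mem_mul hu (Set.mem_inv.2 (by simpa using hkV e)))

theorem stmt15 {G ξ : Type*} [Group G] (ζ : Set (ξ → Set G))
    (hG : IsSoftTopGroup ζ) (H K : Set G)
    (hH : SoftConnectedOn ζ H) (hK : SoftConnectedOn ζ K) :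
    SoftConnectedOn ζ (H * K) := by
  rintro ⟨A, B, hAne, hBne, hABdisj, hABcov, ⟨WA, hWA, hA⟩, ⟨WB, hWB, hB⟩⟩
  have hAeq : ∀ e, WA e ∩ (H * K) = A := fun e => (congrFun hA e).symm
  have hBeq : ∀ e, WB e ∩ (H * K) = B := fun e => (congrFun hB e).symm
  have hAsub : A ⊆ H * K := hABcov ▸ Set.subset_union_left
  have hBsub : B ⊆ H * K := hABcov ▸ Set.subset_union_right
  have hAW : ∀ e, ∀ x ∈ A, x ∈ WA e := fun e x hx => ((hAeq e) ▸ hx).1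
  have hBW : ∀ e, ∀ x ∈ B, x ∈ WB e := fun e x hx => ((hBeq e) ▸ hx).1
  have hWtoA : ∀ e, ∀ x, x ∈ WA e → x ∈ H * K → x ∈ A := by
    intro e x h1 h2
    have : x ∈ WA e ∩ (H * K) := ⟨h1, h2⟩
    rwa [hAeq e] at this
  have hWtoB : ∀ e, ∀ x, x ∈ WB e → x ∈ H * K → x ∈ B := by
    intro e x h1 h2
    have : x ∈ WB e ∩ (H * K) := ⟨h1, h2⟩
    rwa [hBeq e] at this
  have hdisj : ∀ x, x ∈ A → x ∈ B → False := by
    intro x ha hb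
    have : x ∈ (∅ : Set G) := hABdisj ▸ (⟨ha, hb⟩ : x ∈ A ∩ B)
    exact this
  have hcovAB : ∀ x, x ∈ H * K → x ∈ A ∨ x ∈ B := by
    intro x hx
    have : x ∈ A ∪ B := hABcov ▸ hx
    exact this
  -- Step 1: each translate h*K lies entirely in A or entirely in B.
  have step1 : ∀ h ∈ H, (∀ k ∈ K, h * k ∈ A) ∨ (∀ k ∈ K, h * k ∈ B) := by
    intro h hh
    by_contra hcon
    push_neg at hcon
    obtain ⟨⟨ka, hkaK, hkaA⟩, ⟨kb, hkbK, hkbB⟩⟩ := hcon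
    have hkaB : h * ka ∈ B := by
      rcases hcovAB _ (Set.mul_mem_mul hh hkaK) with h1 | h1
      · exact absurd h1 hkaA
      · exact h1
    have hkbA : h * kb ∈ A := by
      rcases hcovAB _ (Set.mul_mem_mul hh hkbK) with h1 | h1
      · exact h1
      · exact absurd h1 hkbB
    -- partition of K
    refine hK ⟨{k ∈ K | h * k ∈ A}, {k ∈ K | h * k ∈ B}, ⟨kb, hkbK, hkbA⟩,
      ⟨ka, hkaK, hkaB⟩, ?_, ?_, ?_, ?_⟩
    · ext x
      simp only [Set.mem_inter_iff, Set.mem_sep_iff, Set.mem_empty_iff_false, iff_false]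
      rintro ⟨⟨-, h1⟩, ⟨-, h2⟩⟩
      exact hdisj _ h1 h2
    · ext x
      simp only [Set.mem_union, Set.mem_sep_iff]
      constructor
      · rintro (⟨h1, -⟩ | ⟨h1, -⟩) <;> exact h1
      · intro hx
        rcases hcovAB _ (Set.mul_mem_mul hh hx) with h1 | h1
        · exact Or.inl ⟨hx, h1⟩
        · exact Or.inr ⟨hx, h1⟩
    · -- soft open trace for the A part
      set S : Set (ξ → Set G) := {U ∈ ζ | ∀ e, ∀ u ∈ U e, h * u ∈ WA e} with hS
      refine ⟨fun e => ⋃ U ∈ S, U e, hG.1.2.2.1 S (fun U hU => hU.1), ?_⟩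
      funext e
      ext x
      simp only [Set.mem_sep_iff, Set.mem_inter_iff, Set.mem_iUnion, exists_prop]
      constructor
      · rintro ⟨hxK, hxA⟩
        obtain ⟨V, hV, hkV, hVsub⟩ :=
          softLeftTrans hG h x WA hWA (fun e' => hAW e' _ hxA)
        exact ⟨⟨V, ⟨hV, hVsub⟩, hkV e⟩, hxK⟩
      · rintro ⟨⟨U, ⟨-, hUA⟩, hxU⟩, hxK⟩
        exact ⟨hxK, hWtoA e _ (hUA e x hxU) (Set.mul_mem_mul hh hxK)⟩
    · -- soft open trace for the B part
      set S : Set (ξ → Set G) := {U ∈ ζ | ∀ e, ∀ u ∈ U e, h * u ∈ WB e} with hS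
      refine ⟨fun e => ⋃ U ∈ S, U e, hG.1.2.2.1 S (fun U hU => hU.1), ?_⟩
      funext e
      ext x
      simp only [Set.mem_sep_iff, Set.mem_inter_iff, Set.mem_iUnion, exists_prop]
      constructor
      · rintro ⟨hxK, hxB⟩
        obtain ⟨V, hV, hkV, hVsub⟩ :=
          softLeftTrans hG h x WB hWB (fun e' => hBW e' _ hxB)
        exact ⟨⟨V, ⟨hV, hVsub⟩, hkV e⟩, hxK⟩
      · rintro ⟨⟨U, ⟨-, hUB⟩, hxU⟩, hxK⟩
        exact ⟨hxK, hWtoB e _ (hUB e x hxU) (Set.mul_mem_mul hh hxK)⟩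
  -- pick a point of K
  obtain ⟨a, haA⟩ := hAne
  obtain ⟨ha, hhaH, ka, hkaK, hprod⟩ := Set.mem_mul.1 (hAsub haA)
  obtain ⟨b, hbB⟩ := hBne
  obtain ⟨hb, hhbH, kb, hkbK, hprod'⟩ := Set.mem_mul.1 (hBsub hbB)
  -- HA, HB partition H
  have hhaHA : ∀ k ∈ K, ha * k ∈ A := by
    rcases step1 ha hhaH with h1 | h1
    · exact h1
    · exact absurd haA (by rw [← hprod] at *; exact fun hc => hdisj _ hc (h1 ka hkaK))
  have hhbHB : ∀ k ∈ K, hb * k ∈ B := by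
    rcases step1 hb hhbH with h1 | h1
    · exact absurd hbB (by rw [← hprod'] at *; exact fun hc => hdisj _ (h1 kb hkbK) hc)
    · exact h1
  refine hH ⟨{h ∈ H | ∀ k ∈ K, h * k ∈ A}, {h ∈ H | ∀ k ∈ K, h * k ∈ B},
    ⟨ha, hhaH, hhaHA⟩, ⟨hb, hhbH, hhbHB⟩, ?_, ?_, ?_, ?_⟩
  · ext x
    simp only [Set.mem_inter_iff, Set.mem_sep_iff, Set.mem_empty_iff_false, iff_false]
    rintro ⟨⟨-, h1⟩, ⟨-, h2⟩⟩
    exact hdisj _ (h1 ka hkaK) (h2 ka hkaK)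
  · ext x
    simp only [Set.mem_union, Set.mem_sep_iff]
    constructor
    · rintro (⟨h1, -⟩ | ⟨h1, -⟩) <;> exact h1
    · intro hx
      rcases step1 x hx with h1 | h1
      · exact Or.inl ⟨hx, h1⟩
      · exact Or.inr ⟨hx, h1⟩
  · -- soft open trace for HA
    set S : Set (ξ → Set G) := {U ∈ ζ | ∀ e, ∀ u ∈ U e, u * ka ∈ WA e} with hS
    refine ⟨fun e => ⋃ U ∈ S, U e, hG.1.2.2.1 S (fun U hU => hU.1), ?_⟩
    funext e
    ext x
    simp only [Set.mem_sep_iff, Set.mem_inter_iff, Set.mem_iUnion, exists_prop]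
    constructor
    · rintro ⟨hxH, hxA⟩
      obtain ⟨U, hU, hhU, hUsub⟩ :=
        softRightTrans hG x ka WA hWA (fun e' => hAW e' _ (hxA ka hkaK))
      exact ⟨⟨U, ⟨hU, hUsub⟩, hhU e⟩, hxH⟩
    · rintro ⟨⟨U, ⟨-, hUA⟩, hxU⟩, hxH⟩
      refine ⟨hxH, ?_⟩
      have hxkaA : x * ka ∈ A :=
        hWtoA e _ (hUA e x hxU) (Set.mul_mem_mul hxH hkaK)
      rcases step1 x hxH with h1 | h1
      · exact h1
      · exact absurd hxkaA (fun hc => hdisj _ hc (h1 ka hkaK))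
  · -- soft open trace for HB
    set S : Set (ξ → Set G) := {U ∈ ζ | ∀ e, ∀ u ∈ U e, u * ka ∈ WB e} with hS
    refine ⟨fun e => ⋃ U ∈ S, U e, hG.1.2.2.1 S (fun U hU => hU.1), ?_⟩
    funext e
    ext x
    simp only [Set.mem_sep_iff, Set.mem_inter_iff, Set.mem_iUnion, exists_prop]
    constructor
    · rintro ⟨hxH, hxB⟩
      obtain ⟨U, hU, hhU, hUsub⟩ :=
        softRightTrans hG x ka WB hWB (fun e' => hBW e' _ (hxB ka hkaK))
      exact ⟨⟨U, ⟨hU, hUsub⟩, hhU e⟩, hxH⟩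
    · rintro ⟨⟨U, ⟨-, hUB⟩, hxU⟩, hxH⟩
      refine ⟨hxH, ?_⟩
      have hxkaB : x * ka ∈ B :=
        hWtoB e _ (hUB e x hxU) (Set.mul_mem_mul hxH hkaK)
      rcases step1 x hxH with h1 | h1
      · exact absurd hxkaB (hdisj _ (h1 ka hkaK))
      · exact h1
end
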